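/- Marginal coverage guarantee of conformal prediction: Let (X_1, Y_1), ..., (X_n, Y_n), (X_{n+1}, Y_{n+1}) be exchangeable random vectors taking values in 𝒳 × 𝒴, let s : 𝒳 × 𝒴 → ℝ be a measurable non-conformity score function, and suppose the scores ε_i = s(X_i, Y_i), i = 1, ..., n+1, have no ties almost surely. For α ∈ (1/(n+1), 1), set q̂ = ε_{(⌈(n+1)(1−α)⌉)}, the ⌈(n+1)(1−α)⌉-th order statistic of ε_1, ..., ε_n, and define the conformal prediction set C_{1−α}(X_{n+1}) = { y ∈ 𝒴 : s(X_{n+1}, y) ≤ q̂ }. Then 1 − α ≤ P(Y_{n+1} ∈ C_{1−α}(X_{n+1})) ≤ 1 − α + 1/(n+1). -/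

import Mathlib

open MeasureTheory

/-- A finite family of random variables is exchangeable if every permutation of the
indices leaves the joint distribution unchanged. -/
def Exchangeable {Ω 𝒵 : Type*} [MeasurableSpace Ω] [MeasurableSpace 𝒵]
    (μ : Measure Ω) {n : ℕ} (Z : Fin n → Ω → 𝒵) : Prop :=
  ∀ π : Equiv.Perm (Fin n),
    Measure.map (fun ω => fun i => Z (π i) ω) μ = Measure.map (fun ω => fun i => Z i ω) μ

/-- The `k`-th order statistic (0-indexed) of the values `v 0, ..., v (m-1)`:
the `(k+1)`-th smallest value. -/
noncomputable def orderStat {m : ℕ} (v : Fin m → ℝ) (k : Fin m) : ℝ :=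
  ((List.ofFn v).insertionSort (· ≤ ·)).get
    (Fin.cast (by simp) k)

/-!
By exchangeability, the rank of `ε (n+1)` among all `n + 1` scores (the number of scores
strictly below it) has the same law as the rank of any other score. Without ties, the ranks of
the `n + 1` scores are almost surely a permutation of `0, …, n`, so each rank value has
probability `1 / (n + 1)`. Finally `ε (n+1) ≤ ε₍ₖ₎` holds exactly when fewer than `k` of the
first `n` scores lie strictly below `ε (n+1)`, i.e. when its rank is `< k`; hence the coverage
probability is exactly `k / (n + 1)` with `k = ⌈(n+1)(1-α)⌉`, which lies between `1 - α` and
`1 - α + 1 / (n + 1)`.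
-/

open Finset
open scoped ENNReal

theorem card_filter_univ_eq_countP_ofFn {α : Type*} {m : ℕ} (v : Fin m → α) (p : α → Prop)
    [DecidablePred p] : #{i | p (v i)} = (List.ofFn v).countP (fun x => decide (p x)) := by
  induction m with
  | zero => simp
  | succ m ih =>
    rw [Fin.card_filter_univ_succ', ih, List.ofFn_succ, List.countP_cons]
    split_ifs <;> simp_all [add_comm]

section Rank

variable {α : Type*} [LinearOrder α]

theorem Monotone.le_apply_iff_card_filter_lt_le {m : ℕ} {f : Fin m → α} (hf : Monotone f)
    (t : α) (k : Fin m) : t ≤ f k ↔ #{i | f i < t} ≤ k := by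
  rw [← not_lt, ← not_lt,
    Fin.lt_card_filter_univ_iff_apply_of_imp (f · < t) fun _ _ hji hi => (hf hji).trans_lt hi]

theorem le_orderStat_iff {m : ℕ} (v : Fin m → ℝ) (t : ℝ) (k : Fin m) :
    t ≤ orderStat v k ↔ #{i | v i < t} ≤ k := by
  set L := (List.ofFn v).insertionSort (· ≤ ·)
  have hcount : #{i | L.get i < t} = #{i | v i < t} := by
    rw [card_filter_univ_eq_countP_ofFn L.get (· < t), card_filter_univ_eq_countP_ofFn v (· < t),
      List.ofFn_get, (List.perm_insertionSort _ _).countP_eq]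
  rw [orderStat, ← hcount]
  exact List.sortedLE_insertionSort.monotone_get.le_apply_iff_card_filter_lt_le t _

def rank {ι : Type*} [Fintype ι] (v : ι → α) (j : ι) : ℕ := #{i | v i < v j}

variable {ι : Type*} [Fintype ι]

theorem rank_lt_rank {v : ι → α} {i j : ι} (h : v i < v j) : rank v i < rank v j := by
  refine card_lt_card ⟨fun k hk => ?_, fun hsub => ?_⟩
  · simp only [mem_filter, mem_univ, true_and] at hk ⊢
    exact hk.trans h
  · simpa using hsub (by simpa using h : i ∈ ({k | v k < v j} : Finset ι))

theorem eq_of_rank_eq {v : ι → α} {i j : ι} (h : rank v i = rank v j) : v i = v j := by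
  rcases lt_trichotomy (v i) (v j) with hlt | heq | hgt
  · exact absurd h (rank_lt_rank hlt).ne
  · exact heq
  · exact absurd h (rank_lt_rank hgt).ne'

theorem rank_lt_card (v : ι → α) (j : ι) : rank v j < Fintype.card ι :=
  card_lt_univ_of_notMem (x := j) (by simp)

theorem exists_rank_eq {v : ι → α} (hv : Function.Injective v) {r : ℕ}
    (hr : r < Fintype.card ι) : ∃ j, rank v j = r := by
  have hinj : Function.Injective (rank v) := fun i j h => hv (eq_of_rank_eq h)
  have himage : univ.image (rank v) = range (Fintype.card ι) := by
    refine eq_of_subset_of_card_le (fun r hr => ?_) ?_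
    · obtain ⟨j, -, rfl⟩ := mem_image.1 hr
      exact mem_range.2 (rank_lt_card v j)
    · rw [card_image_of_injective _ hinj, card_range, card_univ]
  obtain ⟨j, -, hj⟩ := mem_image.1 (himage ▸ mem_range.2 hr)
  exact ⟨j, hj⟩

theorem rank_comp_perm (v : ι → α) (π : Equiv.Perm ι) (j : ι) :
    rank (v ∘ π) j = rank v (π j) := by
  simp only [rank, card_filter, Function.comp_apply]
  exact Equiv.sum_comp π fun i => if v i < v (π j) then 1 else 0

theorem rank_last {n : ℕ} (v : Fin (n + 1) → α) :
    rank v (Fin.last n) = #{i : Fin n | v i.castSucc < v (Fin.last n)} := by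
  rw [rank, card_filter, card_filter, Fin.sum_univ_castSucc]
  simp

theorem le_orderStat_castSucc_iff {n : ℕ} (v : Fin (n + 1) → ℝ) (k : Fin n) :
    v (Fin.last n) ≤ orderStat (fun i => v i.castSucc) k ↔ rank v (Fin.last n) ≤ k := by
  rw [le_orderStat_iff, rank_last]

end Rank

theorem measurable_rank {ι : Type*} [Fintype ι] (j : ι) :
    Measurable fun v : ι → ℝ => rank v j := by
  simp only [rank, card_filter]
  exact Finset.measurable_sum _ fun i _ => Measurable.ite
    (measurableSet_lt (measurable_pi_apply i) (measurable_pi_apply j)) measurable_const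
    measurable_const

theorem ae_injective_of_measure_eq_zero {Ω ι β : Type*} [MeasurableSpace Ω] {μ : Measure Ω}
    [Countable ι] {f : ι → Ω → β} (h : ∀ i j, i ≠ j → μ {ω | f i ω = f j ω} = 0) :
    ∀ᵐ ω ∂μ, Function.Injective (f · ω) := by
  simp only [Function.Injective, ae_all_iff]
  intro i j
  by_cases hij : i = j
  · exact Filter.Eventually.of_forall fun _ _ => hij
  · exact (measure_eq_zero_iff_ae_notMem.1 (h i j hij)).mono fun _ hω heq => absurd heq hω

theorem natCeil_mul_div_mem_Icc {N p : ℝ} (hN : 0 < N) (hp : 0 ≤ p) :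
    (⌈N * p⌉₊ : ℝ) / N ∈ Set.Icc p (p + 1 / N) := by
  constructor
  · rw [le_div_iff₀ hN, mul_comm]
    exact Nat.le_ceil _
  · rw [div_le_iff₀ hN, add_mul, one_div_mul_cancel hN.ne', mul_comm]
    exact (Nat.ceil_lt_add_one (by positivity)).le

section Exchangeable

variable {Ω : Type*} [MeasurableSpace Ω] {μ : Measure Ω} {n : ℕ}

theorem Exchangeable.comp {𝒵 𝒲 : Type*} [MeasurableSpace 𝒵] [MeasurableSpace 𝒲]
    {Z : Fin n → Ω → 𝒵} (h : Exchangeable μ Z) (hZ : ∀ i, Measurable (Z i)) {f : 𝒵 → 𝒲}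
    (hf : Measurable f) : Exchangeable μ fun i ω => f (Z i ω) := by
  intro π
  have hg : Measurable fun z : Fin n → 𝒵 => fun i => f (z i) := by fun_prop
  have := congrArg (Measure.map fun z : Fin n → 𝒵 => fun i => f (z i)) (h π)
  rwa [Measure.map_map hg (by fun_prop), Measure.map_map hg (by fun_prop)] at this

theorem Exchangeable.measure_preimage_comp_perm {𝒵 : Type*} [MeasurableSpace 𝒵]
    {Z : Fin n → Ω → 𝒵} (h : Exchangeable μ Z) (hZ : ∀ i, Measurable (Z i))
    (π : Equiv.Perm (Fin n)) {S : Set (Fin n → 𝒵)} (hS : MeasurableSet S) :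
    μ ((fun ω i => Z (π i) ω) ⁻¹' S) = μ ((fun ω i => Z i ω) ⁻¹' S) := by
  rw [← Measure.map_apply (by fun_prop) hS, h π, Measure.map_apply (by fun_prop) hS]

variable {ε : Fin n → Ω → ℝ}

theorem Exchangeable.measure_rank_eq (h : Exchangeable μ ε) (hε : ∀ i, Measurable (ε i))
    (i j : Fin n) (r : ℕ) : μ {ω | rank (ε · ω) i = r} = μ {ω | rank (ε · ω) j = r} := by
  calc μ {ω | rank (ε · ω) i = r}
      = μ ((fun ω k => ε (Equiv.swap i j k) ω) ⁻¹' {v | rank v j = r}) := by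
        congr 1
        ext ω
        change rank (ε · ω) i = r ↔ rank ((ε · ω) ∘ Equiv.swap i j) j = r
        rw [rank_comp_perm, Equiv.swap_apply_right]
    _ = μ {ω | rank (ε · ω) j = r} :=
        h.measure_preimage_comp_perm hε _ (measurable_rank j (measurableSet_singleton r))

theorem Exchangeable.measure_rank_eq_inv [IsProbabilityMeasure μ] (h : Exchangeable μ ε)
    (hε : ∀ i, Measurable (ε i)) (hties : ∀ i j, i ≠ j → μ {ω | ε i ω = ε j ω} = 0)
    (j : Fin n) {r : ℕ} (hr : r < n) : μ {ω | rank (ε · ω) j = r} = (n : ℝ≥0∞)⁻¹ := by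
  set E : Fin n → Set Ω := fun i => {ω | rank (ε · ω) i = r}
  have hE : ∀ i, MeasurableSet (E i) := fun i =>
    (measurable_rank i).comp (measurable_pi_lambda _ hε) (measurableSet_singleton r)
  have hcover : μ (⋃ i ∈ univ, E i) = 1 := by
    rw [← measure_univ (μ := μ), ← ae_mem_iff_measure_eq
      (Finset.measurableSet_biUnion _ fun i _ => hE i).nullMeasurableSet]
    filter_upwards [ae_injective_of_measure_eq_zero hties] with ω hω
    simpa [E] using exists_rank_eq hω (by simpa using hr)
  have hdisj :
      ((univ : Finset (Fin n)) : Set (Fin n)).Pairwise (Function.onFun (AEDisjoint μ) E) :=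
    fun i _ k _ hik => measure_mono_null (s := E i ∩ E k) (t := {ω | ε i ω = ε k ω})
      (fun _ hω => eq_of_rank_eq (hω.1.trans hω.2.symm)) (hties i k hik)
  rw [measure_biUnion_finset₀ hdisj fun i _ => (hE i).nullMeasurableSet,
    sum_congr rfl fun i _ => h.measure_rank_eq hε i j r, sum_const, card_univ,
    Fintype.card_fin, nsmul_eq_mul] at hcover
  exact ENNReal.eq_inv_of_mul_eq_one_left (by rwa [mul_comm])

theorem Exchangeable.measure_rank_lt [IsProbabilityMeasure μ] (h : Exchangeable μ ε)
    (hε : ∀ i, Measurable (ε i)) (hties : ∀ i j, i ≠ j → μ {ω | ε i ω = ε j ω} = 0)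
    (j : Fin n) {k : ℕ} (hk : k ≤ n) : μ {ω | rank (ε · ω) j < k} = k * (n : ℝ≥0∞)⁻¹ := by
  have hrank : Measurable fun ω => rank (ε · ω) j :=
    (measurable_rank j).comp (measurable_pi_lambda _ hε)
  calc μ {ω | rank (ε · ω) j < k}
      = μ ((fun ω => rank (ε · ω) j) ⁻¹' ↑(range k)) := by simp [Set.preimage]
    _ = ∑ r ∈ range k, μ ((fun ω => rank (ε · ω) j) ⁻¹' {r}) :=
        (sum_measure_preimage_singleton _ fun r _ => hrank (measurableSet_singleton r)).symm
    _ = ∑ r ∈ range k, (n : ℝ≥0∞)⁻¹ := sum_congr rfl fun r hr =>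
        h.measure_rank_eq_inv hε hties j ((mem_range.1 hr).trans_le hk)
    _ = k * (n : ℝ≥0∞)⁻¹ := by rw [sum_const, card_range, nsmul_eq_mul]

theorem Exchangeable.measure_le_orderStat [IsProbabilityMeasure μ] {ε : Fin (n + 1) → Ω → ℝ}
    (h : Exchangeable μ ε) (hε : ∀ i, Measurable (ε i))
    (hties : ∀ i j, i ≠ j → μ {ω | ε i ω = ε j ω} = 0) (k : Fin n) :
    μ {ω | ε (Fin.last n) ω ≤ orderStat (fun i => ε i.castSucc ω) k}
      = (k + 1 : ℕ) * ((n + 1 : ℕ) : ℝ≥0∞)⁻¹ := by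
  have hevent : {ω | ε (Fin.last n) ω ≤ orderStat (fun i => ε i.castSucc ω) k}
      = {ω | rank (ε · ω) (Fin.last n) < k + 1} :=
    Set.ext fun ω => (le_orderStat_castSucc_iff (ε · ω) k).trans Nat.lt_succ_iff.symm
  rw [hevent, h.measure_rank_lt hε hties _ (by omega)]

end Exchangeable

/-- Marginal coverage guarantee of (split) conformal prediction: if the pairs
`(X i, Y i)`, `i = 1, ..., n+1`, are exchangeable, `s` is a measurable non-conformity
score whose scores have no ties almost surely, `α ∈ (1/(n+1), 1)`, and `q̂` is the
`⌈(n+1)(1-α)⌉`-th order statistic (1-indexed) of the first `n` scores, then the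
prediction set `C(x) = {y | s (x, y) ≤ q̂}` satisfies
`1 - α ≤ P(Y (n+1) ∈ C (X (n+1))) ≤ 1 - α + 1/(n+1)`. -/
theorem conformal_marginal_coverage {Ω 𝒳 𝒴 : Type*} [MeasurableSpace Ω]
    [MeasurableSpace 𝒳] [MeasurableSpace 𝒴]
    (μ : Measure Ω) [IsProbabilityMeasure μ] {n : ℕ}
    (X : Fin (n + 1) → Ω → 𝒳) (Y : Fin (n + 1) → Ω → 𝒴)
    (hX : ∀ i, Measurable (X i)) (hY : ∀ i, Measurable (Y i))
    (hexch : Exchangeable μ (fun i ω => (X i ω, Y i ω)))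
    (s : 𝒳 × 𝒴 → ℝ) (hs : Measurable s)
    (hties : ∀ i j, i ≠ j → μ {ω | s (X i ω, Y i ω) = s (X j ω, Y j ω)} = 0)
    (α : ℝ) (hα1 : 1 / ((n : ℝ) + 1) < α) (hα2 : α < 1) :
    μ {ω | Y (Fin.last n) ω ∈ {y : 𝒴 | s (X (Fin.last n) ω, y) ≤
        orderStat (fun i : Fin n => s (X i.castSucc ω, Y i.castSucc ω))
          ⟨⌈((n : ℝ) + 1) * (1 - α)⌉₊ - 1, by
            have hn : (0 : ℝ) < (n : ℝ) + 1 := by positivity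
            have h1 : (1 : ℝ) < α * ((n : ℝ) + 1) := (div_lt_iff₀ hn).mp hα1
            have hx : ((n : ℝ) + 1) * (1 - α) < (n : ℝ) := by nlinarith
            have hceil : ⌈((n : ℝ) + 1) * (1 - α)⌉₊ ≤ n := Nat.ceil_le.mpr hx.le
            have hpos : 0 < ⌈((n : ℝ) + 1) * (1 - α)⌉₊ := by
              rw [Nat.ceil_pos]; nlinarith
            omega⟩}} ∈
      Set.Icc (ENNReal.ofReal (1 - α)) (ENNReal.ofReal (1 - α + 1 / ((n : ℝ) + 1))) := by
  have hn : (0 : ℝ) < n + 1 := by positivity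
  have hk : 0 < ⌈((n : ℝ) + 1) * (1 - α)⌉₊ := Nat.ceil_pos.2 (mul_pos hn (sub_pos.2 hα2))
  have hpair : ∀ i, Measurable fun ω => (X i ω, Y i ω) := fun i => (hX i).prodMk (hY i)
  simp only [Set.mem_ofPred_eq]
  rw [(hexch.comp hpair hs).measure_le_orderStat (fun i => hs.comp (hpair i)) hties,
    Fin.val_mk, Nat.sub_add_cancel hk, ← ENNReal.ofReal_natCast, ← ENNReal.ofReal_natCast,
    ← ENNReal.ofReal_inv_of_pos (by positivity), ← ENNReal.ofReal_mul (by positivity),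
    ← div_eq_mul_inv]
  obtain ⟨hlo, hhi⟩ := natCeil_mul_div_mem_Icc hn (sub_nonneg.2 hα2.le)
  push_cast
  exact ⟨ENNReal.ofReal_le_ofReal hlo, ENNReal.ofReal_le_ofReal hhi⟩
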